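/- There exists a function M̃ : ℝ → Mat_{2n}(ℂ) each of whose 4n² entry functions is real-analytic on all of ℝ, such that M̃(k) = M(k) for every real k ≠ 0. (The matrix M(k) extends analytically across k = 0, i.e. its entries have only removable singularities at the origin.) -/

import Mathlib

/-!
Multiplying by powers of `k` removes every singularity at `k = 0`: `k coth (k c)` and
`k csch (k c)` extend analytically as `cosh (k c) / (c sinhc (k c))` and `1 / (c sinhc (k c))`,
with `sinhc y = sinh y / y`. Hence `Ã = k² A`, `B̃ = k B` and `C̃ = k C` extend analytically, and
`M = [[0, 1], [Ã⁻¹ (k² B̃ - k⁶), -2i Ã⁻¹ (k C̃)]]`. The entries of `Ã⁻¹` are analytic because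
`Ã(k)` is positive definite for every real `k`, `k = 0` included: it is `k²` plus
`Dᵀ diag (k csch (k Δhₘ)) D` plus a nonnegative diagonal, where `D` is the injective
difference matrix.
-/

/-- hyperbolic cotangent, `coth x = cosh x / sinh x` (for `x ≠ 0`). -/
noncomputable def coth (x : ℝ) : ℝ := Real.cosh x / Real.sinh x

/-- hyperbolic cosecant, `csch x = 1 / sinh x` (for `x ≠ 0`). -/
noncomputable def csch (x : ℝ) : ℝ := 1 / Real.sinh x

/-- The symmetric tridiagonal matrix `A(k)` of the linearised fluid-loaded plate problem.
Rows/columns are indexed by `i : Fin n`, corresponding to the 1-based index `i+1`; the plate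
separations are `Δh 0, …, Δh n`.  The 1-based entries are
`A(k)_{ii} = (k + coth(kΔh_{i−1}) + coth(kΔhᵢ))/k` and
`A(k)_{i,i+1} = A(k)_{i+1,i} = −csch(kΔhᵢ)/k`. -/
noncomputable def Amat (n : ℕ) (Δh : ℕ → ℝ) (k : ℝ) : Matrix (Fin n) (Fin n) ℝ :=
  fun i j =>
    if (i : ℕ) = (j : ℕ) then (k + coth (k * Δh (i : ℕ)) + coth (k * Δh ((i : ℕ) + 1))) / k
    else if (i : ℕ) + 1 = (j : ℕ) then -(csch (k * Δh ((i : ℕ) + 1)) / k)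
    else if (j : ℕ) + 1 = (i : ℕ) then -(csch (k * Δh ((j : ℕ) + 1)) / k)
    else 0

/-- The symmetric tridiagonal matrix `B(k)`, with 1-based entries
`B(k)_{ii} = U_{i−1}² coth(kΔh_{i−1}) + Uᵢ² coth(kΔhᵢ)` and
`B(k)_{i,i+1} = B(k)_{i+1,i} = −Uᵢ² csch(kΔhᵢ)`. -/
noncomputable def Bmat (n : ℕ) (Δh U : ℕ → ℝ) (k : ℝ) : Matrix (Fin n) (Fin n) ℝ :=
  fun i j =>
    if (i : ℕ) = (j : ℕ) then
      U (i : ℕ) ^ 2 * coth (k * Δh (i : ℕ)) + U ((i : ℕ) + 1) ^ 2 * coth (k * Δh ((i : ℕ) + 1))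
    else if (i : ℕ) + 1 = (j : ℕ) then -(U ((i : ℕ) + 1) ^ 2 * csch (k * Δh ((i : ℕ) + 1)))
    else if (j : ℕ) + 1 = (i : ℕ) then -(U ((j : ℕ) + 1) ^ 2 * csch (k * Δh ((j : ℕ) + 1)))
    else 0

/-- The symmetric tridiagonal matrix `C(k)`, with 1-based entries
`C(k)_{ii} = U_{i−1} coth(kΔh_{i−1}) + Uᵢ coth(kΔhᵢ)` and
`C(k)_{i,i+1} = C(k)_{i+1,i} = −Uᵢ csch(kΔhᵢ)`. -/
noncomputable def Cmat (n : ℕ) (Δh U : ℕ → ℝ) (k : ℝ) : Matrix (Fin n) (Fin n) ℝ :=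
  fun i j =>
    if (i : ℕ) = (j : ℕ) then
      U (i : ℕ) * coth (k * Δh (i : ℕ)) + U ((i : ℕ) + 1) * coth (k * Δh ((i : ℕ) + 1))
    else if (i : ℕ) + 1 = (j : ℕ) then -(U ((i : ℕ) + 1) * csch (k * Δh ((i : ℕ) + 1)))
    else if (j : ℕ) + 1 = (i : ℕ) then -(U ((j : ℕ) + 1) * csch (k * Δh ((j : ℕ) + 1)))
    else 0

/-- The complex `2n × 2n` block matrix
`M(k) = [[0, Iₙ], [A(k)⁻¹(k B(k) − k⁴ Iₙ), −2i A(k)⁻¹ C(k)]]`,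
real matrices being regarded as complex. -/
noncomputable def Mmat (n : ℕ) (Δh U : ℕ → ℝ) (k : ℝ) :
    Matrix (Fin n ⊕ Fin n) (Fin n ⊕ Fin n) ℂ :=
  Matrix.fromBlocks 0 1
    (((Amat n Δh k)⁻¹ *
        (k • Bmat n Δh U k - k ^ 4 • (1 : Matrix (Fin n) (Fin n) ℝ))).map
      (fun x : ℝ => (x : ℂ)))
    ((-2 * Complex.I) • ((Amat n Δh k)⁻¹ * Cmat n Δh U k).map (fun x : ℝ => (x : ℂ)))

open Matrix

theorem AnalyticAt.dslope {𝕜 E : Type*} [NontriviallyNormedField 𝕜] [NormedAddCommGroup E]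
    [NormedSpace 𝕜 E] {f : 𝕜 → E} {a z : 𝕜} (ha : AnalyticAt 𝕜 f a) (hz : AnalyticAt 𝕜 f z) :
    AnalyticAt 𝕜 (dslope f a) z := by
  rcases eq_or_ne z a with rfl | hza
  · obtain ⟨p, hp⟩ := ha
    exact ⟨p.fslope, hp.has_fpower_series_dslope_fslope⟩
  · have hslope : AnalyticAt 𝕜 (slope f a) z :=
      ((analyticAt_id.sub analyticAt_const).inv (sub_ne_zero.2 hza)).smul
        (hz.sub analyticAt_const)
    exact hslope.congr (dslope_eventuallyEq_slope_of_ne f hza).symm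

noncomputable def sinhc : ℝ → ℝ := dslope Real.sinh 0

lemma sinhc_of_ne_zero {y : ℝ} (hy : y ≠ 0) : sinhc y = Real.sinh y / y := by
  rw [sinhc, dslope_of_ne _ hy, slope_def_field, Real.sinh_zero, sub_zero, sub_zero]

lemma sinhc_pos (y : ℝ) : 0 < sinhc y := by
  rcases lt_trichotomy y 0 with hy | rfl | hy
  · rw [sinhc_of_ne_zero hy.ne]
    exact div_pos_of_neg_of_neg (Real.sinh_neg_iff.2 hy) hy
  · rw [sinhc, dslope_same, Real.deriv_sinh, Real.cosh_zero]
    exact one_pos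
  · rw [sinhc_of_ne_zero hy.ne']
    exact div_pos (Real.sinh_pos_iff.2 hy) hy

lemma analyticAt_sinhc (y : ℝ) : AnalyticAt ℝ sinhc y :=
  Real.analyticAt_sinh.dslope Real.analyticAt_sinh

noncomputable def mulCoth (c k : ℝ) : ℝ := Real.cosh (k * c) / (c * sinhc (k * c))

noncomputable def mulCsch (c k : ℝ) : ℝ := (c * sinhc (k * c))⁻¹

lemma mulCoth_of_ne_zero (c : ℝ) {k : ℝ} (hk : k ≠ 0) : mulCoth c k = k * coth (k * c) := by
  rcases eq_or_ne c 0 with rfl | hc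
  · simp [mulCoth, coth]
  · have hkc : k * c ≠ 0 := mul_ne_zero hk hc
    rw [mulCoth, coth, sinhc_of_ne_zero hkc]
    field_simp [Real.sinh_eq_zero.not.2 hkc]

lemma mulCsch_of_ne_zero (c : ℝ) {k : ℝ} (hk : k ≠ 0) : mulCsch c k = k * csch (k * c) := by
  rcases eq_or_ne c 0 with rfl | hc
  · simp [mulCsch, csch]
  · have hkc : k * c ≠ 0 := mul_ne_zero hk hc
    rw [mulCsch, csch, sinhc_of_ne_zero hkc]
    field_simp [Real.sinh_eq_zero.not.2 hkc]

lemma analyticAt_mulCoth (c x : ℝ) : AnalyticAt ℝ (mulCoth c) x := by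
  rcases eq_or_ne c 0 with rfl | hc
  · have hzero : mulCoth 0 = fun _ => 0 := by funext k; simp [mulCoth]
    exact hzero ▸ analyticAt_const
  · exact (Real.analyticAt_cosh.comp (analyticAt_id.mul analyticAt_const)).div
      (analyticAt_const.mul ((analyticAt_sinhc _).comp (analyticAt_id.mul analyticAt_const)))
      (mul_ne_zero hc (sinhc_pos _).ne')

lemma analyticAt_mulCsch (c x : ℝ) : AnalyticAt ℝ (mulCsch c) x := by
  rcases eq_or_ne c 0 with rfl | hc
  · have hzero : mulCsch 0 = fun _ => 0 := by funext k; simp [mulCsch]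
    exact hzero ▸ analyticAt_const
  · exact (analyticAt_const.mul ((analyticAt_sinhc _).comp
      (analyticAt_id.mul analyticAt_const))).inv (mul_ne_zero hc (sinhc_pos _).ne')

lemma mulCsch_pos {c : ℝ} (hc : 0 < c) (k : ℝ) : 0 < mulCsch c k :=
  inv_pos.2 (mul_pos hc (sinhc_pos _))

lemma mulCsch_le_mulCoth {c : ℝ} (hc : 0 < c) (k : ℝ) : mulCsch c k ≤ mulCoth c k := by
  rw [mulCsch, mulCoth, div_eq_mul_inv]
  exact le_mul_of_one_le_left (mulCsch_pos hc k).le (Real.one_le_cosh _)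

section Tridiagonal

variable (R : Type*) (n : ℕ)

def tridiag [Ring R] (a b : ℕ → R) : Matrix (Fin n) (Fin n) R := fun i j =>
  if (i : ℕ) = j then a i + a (i + 1)
  else if (i : ℕ) + 1 = j then -b (i + 1)
  else if (j : ℕ) + 1 = i then -b (j + 1)
  else 0

def diffMatrix [Ring R] : Matrix (Fin (n + 1)) (Fin n) R := fun m i =>
  (if (m : ℕ) = i then 1 else 0) - (if (m : ℕ) = i + 1 then 1 else 0)

variable {R n}

lemma tridiag_eq_transpose_mul_diagonal_mul_add_diagonal [Ring R] (a b : ℕ → R) :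
    tridiag R n a b =
      (diffMatrix R n)ᵀ * diagonal (fun m : Fin (n + 1) => b m) * diffMatrix R n +
        diagonal (fun i : Fin n => a i - b i + (a (i + 1) - b (i + 1))) := by
  ext i j
  have hcast : ∀ (m : Fin (n + 1)) (l : Fin n), (m : ℕ) = l ↔ m = l.castSucc := by
    simp [Fin.ext_iff]
  have hsucc : ∀ (m : Fin (n + 1)) (l : Fin n), (m : ℕ) = l + 1 ↔ m = l.succ := by
    simp [Fin.ext_iff]
  simp only [tridiag, diffMatrix, Matrix.add_apply, mul_apply, transpose_apply, diagonal_apply,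
    sub_mul, mul_sub, ite_mul, mul_ite, one_mul, mul_one, zero_mul, mul_zero,
    Finset.sum_sub_distrib, hcast, hsucc, Finset.sum_ite_eq', Finset.mem_univ, if_true]
  simp only [Fin.ext_iff, Fin.val_castSucc, Fin.val_succ]
  obtain ⟨i, hi⟩ := i
  obtain ⟨j, hj⟩ := j
  dsimp only
  split_ifs <;> subst_vars <;> first | omega | abel

lemma diffMatrix_mulVec_injective [CommRing R] [IsDomain R] :
    Function.Injective (diffMatrix R n).mulVec := by
  intro x y hxy
  have hdet : ((diffMatrix R n).submatrix Fin.castSucc id).det = 1 := by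
    rw [det_of_isLowerTriangular]
    · simp [diffMatrix]
    · intro i j hij
      have := Fin.lt_def.1 (OrderDual.toDual_lt_toDual.1 hij)
      simp only [submatrix_apply, id_eq, diffMatrix, Fin.val_castSucc]
      rw [if_neg (by omega), if_neg (by omega), sub_zero]
  have hker : (diffMatrix R n).submatrix Fin.castSucc id *ᵥ (x - y) = 0 := by
    ext i
    simp only [mulVec_sub, Pi.sub_apply, Pi.zero_apply, sub_eq_zero]
    exact congrFun hxy (Fin.castSucc i)
  exact sub_eq_zero.1 (eq_zero_of_mulVec_eq_zero (by simp [hdet]) hker)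

lemma posDef_tridiag {a b : ℕ → ℝ} (hb : ∀ m ≤ n, 0 < b m) (hba : ∀ m ≤ n, b m ≤ a m) :
    (tridiag ℝ n a b).PosDef := by
  rw [tridiag_eq_transpose_mul_diagonal_mul_add_diagonal]
  refine PosDef.add_posSemidef ?_ (posSemidef_diagonal_iff.2 fun i => ?_)
  · simpa [conjTranspose_eq_transpose_of_trivial] using
      (PosDef.diagonal fun m : Fin (n + 1) => hb m m.is_le).conjTranspose_mul_mul_same
        diffMatrix_mulVec_injective
  · exact add_nonneg (sub_nonneg.2 (hba _ i.isLt.le)) (sub_nonneg.2 (hba _ i.isLt))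

end Tridiagonal

section EntrywiseAnalytic

variable {𝕜 : Type*} [NontriviallyNormedField 𝕜] {l m p : Type*}

def EntrywiseAnalyticAt {E : Type*} [NormedAddCommGroup E] [NormedSpace 𝕜 E]
    (A : 𝕜 → Matrix l p E) (x : 𝕜) : Prop :=
  ∀ i j, AnalyticAt 𝕜 (fun k => A k i j) x

namespace EntrywiseAnalyticAt

variable {𝔸 : Type*} {x : 𝕜}

lemma const [NormedAddCommGroup 𝔸] [NormedSpace 𝕜 𝔸] (A : Matrix l p 𝔸) :
    EntrywiseAnalyticAt (fun _ => A) x :=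
  fun _ _ => analyticAt_const

section NormedRing

variable [NormedRing 𝔸] [NormedAlgebra 𝕜 𝔸] {A B : 𝕜 → Matrix l p 𝔸}

lemma add (hA : EntrywiseAnalyticAt A x) (hB : EntrywiseAnalyticAt B x) :
    EntrywiseAnalyticAt (fun k => A k + B k) x :=
  fun i j => (hA i j).add (hB i j)

lemma sub (hA : EntrywiseAnalyticAt A x) (hB : EntrywiseAnalyticAt B x) :
    EntrywiseAnalyticAt (fun k => A k - B k) x :=
  fun i j => (hA i j).sub (hB i j)

lemma smul {f : 𝕜 → 𝔸} (hf : AnalyticAt 𝕜 f x) (hA : EntrywiseAnalyticAt A x) :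
    EntrywiseAnalyticAt (fun k => f k • A k) x :=
  fun i j => hf.mul (hA i j)

lemma mul [Fintype m] {A : 𝕜 → Matrix l m 𝔸} {B : 𝕜 → Matrix m p 𝔸}
    (hA : EntrywiseAnalyticAt A x) (hB : EntrywiseAnalyticAt B x) :
    EntrywiseAnalyticAt (fun k => A k * B k) x := fun i j => by
  simp only [mul_apply]
  exact Finset.analyticAt_fun_sum _ fun r _ => (hA i r).mul (hB r j)

end NormedRing

lemma map {𝔹 : Type*} [NormedAddCommGroup 𝔸] [NormedSpace 𝕜 𝔸] [NormedAddCommGroup 𝔹]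
    [NormedSpace 𝕜 𝔹] {A : 𝕜 → Matrix l p 𝔸} (L : 𝔸 →L[𝕜] 𝔹)
    (hA : EntrywiseAnalyticAt A x) : EntrywiseAnalyticAt (fun k => (A k).map L) x :=
  fun i j => (L.analyticAt _).comp (hA i j)

lemma fromBlocks [NormedAddCommGroup 𝔸] [NormedSpace 𝕜 𝔸] {l' p' : Type*}
    {A : 𝕜 → Matrix l p 𝔸} {B : 𝕜 → Matrix l p' 𝔸} {C : 𝕜 → Matrix l' p 𝔸}
    {D : 𝕜 → Matrix l' p' 𝔸} (hA : EntrywiseAnalyticAt A x) (hB : EntrywiseAnalyticAt B x)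
    (hC : EntrywiseAnalyticAt C x) (hD : EntrywiseAnalyticAt D x) :
    EntrywiseAnalyticAt (fun k => Matrix.fromBlocks (A k) (B k) (C k) (D k)) x := by
  rintro (i | i) (j | j)
  exacts [hA i j, hB i j, hC i j, hD i j]

section Field

variable [Fintype m] [DecidableEq m] [NontriviallyNormedField 𝔸] [NormedAlgebra 𝕜 𝔸]
  {A : 𝕜 → Matrix m m 𝔸}

lemma det (hA : EntrywiseAnalyticAt A x) : AnalyticAt 𝕜 (fun k => (A k).det) x := by
  simp only [det_apply, Units.smul_def, zsmul_eq_mul]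
  exact Finset.analyticAt_fun_sum _ fun σ _ =>
    analyticAt_const.mul (Finset.analyticAt_fun_prod _ fun i _ => hA _ _)

lemma adjugate (hA : EntrywiseAnalyticAt A x) :
    EntrywiseAnalyticAt (fun k => (A k).adjugate) x := fun i j => by
  simp only [adjugate_apply]
  refine det fun a b => ?_
  by_cases h : a = j
  · simp only [updateRow_apply, h, if_true]
    exact analyticAt_const
  · simp only [updateRow_apply, h, if_false]
    exact hA a b

lemma inv (hA : EntrywiseAnalyticAt A x) (hdet : (A x).det ≠ 0) :
    EntrywiseAnalyticAt (fun k => (A k)⁻¹) x := fun i j => by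
  simp only [inv_def, Matrix.smul_apply, smul_eq_mul, Ring.inverse_eq_inv']
  exact (hA.det.inv hdet).mul (hA.adjugate i j)

end Field

end EntrywiseAnalyticAt

end EntrywiseAnalytic

section PlateMatrices

variable (n : ℕ) (Δh : ℕ → ℝ)

/-- For `k ≠ 0` and `w = U ^ 2`, `U`, `1` this is `k B(k)`, `k C(k)` and `k² A(k) - k²`. -/
noncomputable def scaledCoupling (w : ℕ → ℝ) (k : ℝ) : Matrix (Fin n) (Fin n) ℝ :=
  tridiag ℝ n (fun m => w m * mulCoth (Δh m) k) (fun m => w m * mulCsch (Δh m) k)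

noncomputable def scaledAmat (k : ℝ) : Matrix (Fin n) (Fin n) ℝ :=
  k ^ 2 • 1 + scaledCoupling n Δh 1 k

noncomputable def Mext (U : ℕ → ℝ) (k : ℝ) :
    Matrix (Fin n ⊕ Fin n) (Fin n ⊕ Fin n) ℂ :=
  Matrix.fromBlocks 0 1
    (((scaledAmat n Δh k)⁻¹ *
        (k ^ 2 • scaledCoupling n Δh (fun m => U m ^ 2) k - k ^ 6 • 1)).map
      fun x : ℝ => (x : ℂ))
    ((-2 * Complex.I) • ((scaledAmat n Δh k)⁻¹ * (k • scaledCoupling n Δh U k)).map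
      fun x : ℝ => (x : ℂ))

variable {n Δh}

lemma scaledCoupling_of_ne_zero (w : ℕ → ℝ) {k : ℝ} (hk : k ≠ 0) :
    scaledCoupling n Δh w k =
      k • tridiag ℝ n (fun m => w m * coth (k * Δh m)) (fun m => w m * csch (k * Δh m)) := by
  ext i j
  simp only [scaledCoupling, tridiag, Matrix.smul_apply, smul_eq_mul,
    mulCoth_of_ne_zero _ hk, mulCsch_of_ne_zero _ hk, mul_comm k]
  split_ifs <;> ring

lemma scaledAmat_of_ne_zero {k : ℝ} (hk : k ≠ 0) : scaledAmat n Δh k = k ^ 2 • Amat n Δh k := by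
  ext i j
  simp only [scaledAmat, scaledCoupling_of_ne_zero _ hk, tridiag, Amat, Matrix.add_apply,
    Matrix.smul_apply, Matrix.one_apply, smul_eq_mul, Pi.one_apply, one_mul, Fin.ext_iff]
  split_ifs <;> field_simp <;> ring

lemma posDef_scaledAmat (hΔh : ∀ i ≤ n, 0 < Δh i) (k : ℝ) : (scaledAmat n Δh k).PosDef :=
  PosDef.posSemidef_add (PosSemidef.one.smul (sq_nonneg k))
    (posDef_tridiag (fun m hm => by simpa using mulCsch_pos (hΔh m hm) k)
      fun m hm => by simpa using mulCsch_le_mulCoth (hΔh m hm) k)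

lemma entrywiseAnalyticAt_scaledCoupling (w : ℕ → ℝ) (x : ℝ) :
    EntrywiseAnalyticAt (scaledCoupling n Δh w) x := fun i j => by
  have hcoth (m : ℕ) := analyticAt_const (v := w m) |>.mul (analyticAt_mulCoth (Δh m) x)
  have hcsch (m : ℕ) := analyticAt_const (v := w m) |>.mul (analyticAt_mulCsch (Δh m) x)
  simp only [scaledCoupling, tridiag]
  split_ifs
  exacts [(hcoth _).add (hcoth _), (hcsch _).neg, (hcsch _).neg, analyticAt_const]

lemma entrywiseAnalyticAt_scaledAmat (x : ℝ) : EntrywiseAnalyticAt (scaledAmat n Δh) x :=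
  (EntrywiseAnalyticAt.smul (f := fun k => k ^ 2) (analyticAt_id.pow 2) (.const 1)).add
    (entrywiseAnalyticAt_scaledCoupling 1 x)

lemma entrywiseAnalyticAt_Mext (U : ℕ → ℝ) (hΔh : ∀ i ≤ n, 0 < Δh i) (x : ℝ) :
    EntrywiseAnalyticAt (Mext n Δh U) x := by
  have hAinv : EntrywiseAnalyticAt (fun k => (scaledAmat n Δh k)⁻¹) x :=
    (entrywiseAnalyticAt_scaledAmat x).inv (posDef_scaledAmat hΔh x).det_pos.ne'
  refine .fromBlocks (.const 0) (.const 1) (.map Complex.ofRealCLM (hAinv.mul (.sub ?_ ?_)))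
    (.smul analyticAt_const (.map Complex.ofRealCLM (hAinv.mul ?_)))
  · exact .smul (f := fun k => k ^ 2) (analyticAt_id.pow 2)
      (entrywiseAnalyticAt_scaledCoupling _ x)
  · exact .smul (f := fun k => k ^ 6) (analyticAt_id.pow 6) (.const 1)
  · exact .smul analyticAt_id (entrywiseAnalyticAt_scaledCoupling _ x)

lemma inv_Amat_of_ne_zero (hΔh : ∀ i ≤ n, 0 < Δh i) {k : ℝ} (hk : k ≠ 0) :
    (Amat n Δh k)⁻¹ = k ^ 2 • (scaledAmat n Δh k)⁻¹ := by
  refine inv_eq_right_inv ?_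
  rw [Matrix.mul_smul, ← Matrix.smul_mul, ← scaledAmat_of_ne_zero hk,
    mul_nonsing_inv _ (isUnit_iff_isUnit_det _ |>.1 (posDef_scaledAmat hΔh k).isUnit)]

lemma Mext_of_ne_zero (U : ℕ → ℝ) (hΔh : ∀ i ≤ n, 0 < Δh i) {k : ℝ} (hk : k ≠ 0) :
    Mext n Δh U k = Mmat n Δh U k := by
  have hB : scaledCoupling n Δh (fun m => U m ^ 2) k = k • Bmat n Δh U k :=
    scaledCoupling_of_ne_zero _ hk
  have hC : scaledCoupling n Δh U k = k • Cmat n Δh U k := scaledCoupling_of_ne_zero _ hk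
  have h21 : k ^ 2 • k • Bmat n Δh U k - k ^ 6 • 1 =
      k ^ 2 • (k • Bmat n Δh U k - k ^ 4 • 1) := by module
  have h22 : k • k • Cmat n Δh U k = k ^ 2 • Cmat n Δh U k := by module
  simp only [Mext, Mmat, inv_Amat_of_ne_zero hΔh hk, hB, hC, Matrix.smul_mul, ← Matrix.mul_smul,
    h21, h22]

end PlateMatrices

theorem statement19_general (n : ℕ) (Δh U : ℕ → ℝ) (hΔh : ∀ i ≤ n, 0 < Δh i) :
    ∃ Mt : ℝ → Matrix (Fin n ⊕ Fin n) (Fin n ⊕ Fin n) ℂ,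
      (∀ (i j : Fin n ⊕ Fin n) (x : ℝ), AnalyticAt ℝ (fun k : ℝ => Mt k i j) x) ∧
      ∀ k : ℝ, k ≠ 0 → Mt k = Mmat n Δh U k :=
  ⟨Mext n Δh U, fun i j x => entrywiseAnalyticAt_Mext U hΔh x i j,
    fun _ hk => Mext_of_ne_zero U hΔh hk⟩

/-- the matrix `M(k)` extends to a matrix-valued function of `k ∈ ℝ` each of
whose entries is real-analytic on all of `ℝ`, agreeing with `M(k)` for every `k ≠ 0`. -/
theorem statement19 (n : ℕ) (hn : 1 ≤ n) (Δh U : ℕ → ℝ) (hΔh : ∀ i ≤ n, 0 < Δh i) :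
    ∃ Mt : ℝ → Matrix (Fin n ⊕ Fin n) (Fin n ⊕ Fin n) ℂ,
      (∀ (i j : Fin n ⊕ Fin n) (x : ℝ), AnalyticAt ℝ (fun k : ℝ => Mt k i j) x) ∧
      ∀ k : ℝ, k ≠ 0 → Mt k = Mmat n Δh U k :=
  statement19_general n Δh U hΔh
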